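/- arXiv:math/0702601 — 7 statements merged into one kernel-verified Lean document; each statement's English description precedes it below -/
import Mathlib

section
/- Let P₁,…,P_{k+1} be points in ℝⁿ and fix indices 1 ≤ i < j ≤ k+1. For s ∈ ℝ define a symmetric array L(s) of modified squared distances by L(s)_{uv} = ‖P_u − P_v‖² for all pairs {u,v} ≠ {i,j}, L(s)_{ij} = ‖P_i − P_j‖² + s, and L(s)_{uu} = 0, and let G(s) be the k×k matrix with entries G(s)_{ab} = (L(s)_{1a} + L(s)_{1b} − L(s)_{ab})/2 for 2 ≤ a,b ≤ k+1 (so that G(0)_{ab} = ⟨P_a − P₁, P_b − P₁⟩ and det G(0) is the Gram determinant of the simplex). Then the derivative d/ds [det G(s)] at s = 0 equals det(⟨P_a − P_i, P_b − P_j⟩)_{a,b}, where the indices a and b both run, in increasing order, over the set {1,…,k+1} ∖ {i,j}. (In the paper's notation: ∂_{lij²} (→P₁⋯P_{k+1})² = →P_iP₁⋯P̂_i⋯P̂_j⋯P_{k+1} · →P_jP₁⋯P̂_i⋯P̂_j⋯P_{k+1}.) -/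
open RealInnerProductSpace

/-- The array of modified squared distances: `L s u v` equals `‖P u - P v‖²` for all pairs
`{u,v} ≠ {i,j}`, equals `‖P i - P j‖² + s` for the pair `{i,j}`, and is `0` on the diagonal. -/
noncomputable def modSqDist {n k : ℕ} (P : Fin (k + 1) → EuclideanSpace ℝ (Fin n))
    (i j : Fin (k + 1)) (s : ℝ) (u v : Fin (k + 1)) : ℝ :=
  if u = v then 0
  else if (u = i ∧ v = j) ∨ (u = j ∧ v = i) then ‖P u - P v‖ ^ 2 + s
  else ‖P u - P v‖ ^ 2

/-!
Border the matrix `-L(s)/2` of halved, negated modified squared distances by a zero corner and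
rows of ones. Subtracting the row and column of any base point from the others shows that the
determinant of this bordered matrix `B(s)` is `-det G(s)`. Since `B(s) = B(0) + s • D` with `D`
supported on the entries `(i, j)` and `(j, i)`, Jacobi's formula turns the derivative into the
`(i, j)` cofactor of the symmetric matrix `B(0)`. That cofactor is again a bordered matrix; reducing
it with base point `i` for the rows and `j` for the columns yields, by polarization, the mixed Gram
matrix `⟨P a - P i, P b - P j⟩`.
-/

open Matrix Finset Equiv

namespace Matrix

section Jacobi

variable {n : Type*} [Fintype n] [DecidableEq n]

theorem sum_det_updateCol_eq_trace_adjugate_mul {R : Type*} [CommRing R] (A D : Matrix n n R) :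
    ∑ q, (A.updateCol q fun p => D p q).det = trace (adjugate A * D) := by
  simp only [← cramer_apply, cramer_eq_adjugate_mulVec, trace, diag, mul_apply, mulVec, dotProduct]

theorem hasDerivAt_det_add_smul {𝕜 : Type*} [NontriviallyNormedField 𝕜] (A D : Matrix n n 𝕜) :
    HasDerivAt (fun s : 𝕜 => (A + s • D).det) (trace (adjugate A * D)) 0 := by
  have hdet : (fun s : 𝕜 => (A + s • D).det) =
      fun s => ∑ σ : Perm n, (Perm.sign σ : 𝕜) * ∏ q, (A (σ q) q + s * D (σ q) q) := by
    ext s; simp [det_apply']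
  have hprod (σ : Perm n) : HasDerivAt (fun s : 𝕜 => ∏ q, (A (σ q) q + s * D (σ q) q))
      (∑ q, (∏ q' ∈ univ.erase q, A (σ q') q') * D (σ q) q) 0 := by
    simpa using HasDerivAt.fun_finsetProd (u := univ) fun q _ =>
      ((hasDerivAt_id (0 : 𝕜)).mul_const (D (σ q) q)).const_add (A (σ q) q)
  have hupdate (q : n) (σ : Perm n) :
      ∏ q', (A.updateCol q fun p => D p q) (σ q') q' =
        (∏ q' ∈ univ.erase q, A (σ q') q') * D (σ q) q := by
    rw [← mul_prod_erase _ _ (mem_univ q), mul_comm]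
    congr 1
    · exact prod_congr rfl fun q' hq' => by simp [ne_of_mem_erase hq']
    · simp
  have hval : trace (adjugate A * D) = ∑ σ : Perm n, (Perm.sign σ : 𝕜) *
      ∑ q, (∏ q' ∈ univ.erase q, A (σ q') q') * D (σ q) q := by
    simp only [← sum_det_updateCol_eq_trace_adjugate_mul, det_apply', hupdate, mul_sum]
    exact sum_comm
  rw [hdet, hval]
  exact HasDerivAt.fun_sum fun σ _ => (hprod σ).const_mul _

end Jacobi

variable {R : Type*} [CommRing R] {m : ℕ}

theorem det_eq_of_row_eq_single (M : Matrix (Fin (m + 1)) (Fin (m + 1)) R) {p q : Fin (m + 1)}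
    (h : M p = Pi.single q 1) :
    M.det = (-1) ^ (p + q : ℕ) * (M.submatrix p.succAbove q.succAbove).det := by
  have : M = M.updateRow p (Pi.single q 1) := by rw [← h, updateRow_eq_self]
  rw [this, ← adjugate_apply, adjugate_fin_succ_eq_det_submatrix]
  congr 2
  ext a b
  simp

theorem det_eq_of_col_eq_single (M : Matrix (Fin (m + 1)) (Fin (m + 1)) R) {p q : Fin (m + 1)}
    (h : ∀ r, M r q = (Pi.single p 1 : Fin (m + 1) → R) r) :
    M.det = (-1) ^ (p + q : ℕ) * (M.submatrix p.succAbove q.succAbove).det := by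
  rw [← det_transpose, det_eq_of_row_eq_single Mᵀ (funext h), add_comm, ← det_transpose]
  rfl

/-- The matrix `!![0, 1ᵀ; 1, X]`; for `X = -D/2` with `D` a matrix of squared distances it is a
rescaled Cayley–Menger matrix. -/
def bordered (X : Matrix (Fin m) (Fin m) R) : Matrix (Fin (m + 1)) (Fin (m + 1)) R :=
  of (Fin.cons (Fin.cons 0 1) fun u => Fin.cons 1 (X u))

section bordered

variable (X : Matrix (Fin m) (Fin m) R)

@[simp] theorem bordered_zero_zero : bordered X 0 0 = 0 := rfl

@[simp] theorem bordered_zero_succ (v : Fin m) : bordered X 0 v.succ = 1 := rfl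

@[simp] theorem bordered_succ_zero (u : Fin m) : bordered X u.succ 0 = 1 := rfl

@[simp] theorem bordered_succ_succ (u v : Fin m) : bordered X u.succ v.succ = X u v := rfl

theorem bordered_transpose : (bordered X)ᵀ = bordered Xᵀ := by
  ext x y
  cases x using Fin.cases <;> cases y using Fin.cases <;> simp

theorem det_bordered_add_row (u : Fin m → R) :
    (bordered (X + of fun a _ => u a)).det = (bordered X).det :=
  det_eq_of_forall_row_eq_smul_add_const (Fin.cons 0 u) 0 rfl fun x y => by
    cases x using Fin.cases <;> cases y using Fin.cases <;> simp

theorem det_bordered_add_row_add_col (u v : Fin m → R) :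
    (bordered (X + of fun a b => u a + v b)).det = (bordered X).det := by
  have hT : (X + of fun a b => u a + v b)ᵀ = (X + of fun a _ => u a)ᵀ + of fun a _ => v a := by
    ext a b; simp only [transpose_apply, add_apply, of_apply]; ring
  rw [← det_transpose, bordered_transpose, hT, det_bordered_add_row, ← bordered_transpose,
    det_transpose, det_bordered_add_row]

end bordered

theorem bordered_submatrix_succAbove (X : Matrix (Fin (m + 1)) (Fin (m + 1)) R)
    (p q : Fin (m + 1)) :
    (bordered X).submatrix p.succ.succAbove q.succ.succAbove =
      bordered (X.submatrix p.succAbove q.succAbove) := by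
  ext x y
  cases x using Fin.cases <;> cases y using Fin.cases <;> simp [Fin.succ_succAbove_succ]

theorem det_bordered (X : Matrix (Fin (m + 1)) (Fin (m + 1)) R) (c c' : Fin (m + 1)) :
    (bordered X).det = -(-1) ^ (c + c' : ℕ) * (of fun a b : Fin m =>
      X (c.succAbove a) (c'.succAbove b) - X (c.succAbove a) c' - X c (c'.succAbove b)
        + X c c').det := by
  -- adding multiples of the border row and column clears row `c` and column `c'` of `X`
  set Y := X + of fun a b => -X a c' + (X c c' - X c b) with hY
  have hYc (b) : Y c b = 0 := by simp [hY]; ring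
  have hYc' (a) : Y a c' = 0 := by simp [hY]
  rw [← det_bordered_add_row_add_col X (fun a => -X a c') (fun b => X c c' - X c b), ← hY,
    det_eq_of_row_eq_single _ (p := c.succ) (q := 0) (by
      ext y; cases y using Fin.cases <;> simp [hYc]),
    det_eq_of_col_eq_single _ (p := 0) (q := c') (by
      intro r; cases r using Fin.cases <;> simp [hYc', Fin.succ_succAbove_succ])]
  have hminor : ((bordered Y).submatrix c.succ.succAbove (0 : Fin (m + 2)).succAbove).submatrix
      (0 : Fin (m + 1)).succAbove c'.succAbove = of fun a b : Fin m =>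
        X (c.succAbove a) (c'.succAbove b) - X (c.succAbove a) c' - X c (c'.succAbove b)
          + X c c' := by
    ext a b; simp [hY, Fin.succ_succAbove_succ]; ring
  rw [hminor]
  simp only [Fin.val_succ, Fin.val_zero, add_zero, zero_add, pow_succ]
  ring

end Matrix

noncomputable def Fin.succAboveSuccAboveEquiv {m : ℕ} (p : Fin (m + 2)) (q : Fin (m + 1)) :
    Fin m ≃ {x // x ≠ p ∧ x ≠ p.succAbove q} :=
  Equiv.ofBijective
    (fun a => ⟨p.succAbove (q.succAbove a), succAbove_ne p _,
      fun h => succAbove_ne q a (succAbove_right_injective h)⟩)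
    ⟨fun a b h => succAbove_right_injective (succAbove_right_injective (congrArg Subtype.val h)),
      by
        rintro ⟨x, hxp, hxq⟩
        obtain ⟨y, rfl⟩ := exists_succAbove_eq hxp
        obtain ⟨a, rfl⟩ := exists_succAbove_eq fun h : y = q => hxq (congrArg _ h)
        exact ⟨a, rfl⟩⟩

theorem real_inner_sub_sub_eq_norm_sq {E : Type*} [NormedAddCommGroup E] [InnerProductSpace ℝ E]
    (x y a b : E) :
    inner ℝ (x - a) (y - b) = (‖x - b‖ ^ 2 + ‖a - y‖ ^ 2 - ‖x - y‖ ^ 2 - ‖a - b‖ ^ 2) / 2 := by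
  simp only [norm_sub_sq_real, inner_sub_left, inner_sub_right, real_inner_comm b x]
  ring

theorem det_gram_eq_neg_det_bordered {K : Type*} [Field K] {k : ℕ}
    (L : Fin (k + 1) → Fin (k + 1) → K) (h₀ : L 0 0 = 0) (hsymm : ∀ u, L u 0 = L 0 u) :
    (of fun a b : Fin k => (L 0 a.succ + L 0 b.succ - L a.succ b.succ) / 2).det =
      -(bordered (of fun u v => -L u v / 2)).det := by
  rw [det_bordered _ 0 0]
  simp only [Fin.zero_succAbove, of_apply, hsymm, h₀, Fin.val_zero, add_zero, pow_zero]
  rw [neg_one_mul, neg_neg]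
  congr 1
  ext a b
  simp only [of_apply]
  ring

theorem adjugate_bordered_negHalfSqDist {E : Type*} [NormedAddCommGroup E]
    [InnerProductSpace ℝ E] {m : ℕ} (P : Fin (m + 2) → E) (p : Fin (m + 2)) (q : Fin (m + 1)) :
    adjugate (bordered (of fun u v => -‖P u - P v‖ ^ 2 / 2)) p.succ (p.succAbove q).succ =
      (of fun a b : Fin m => inner ℝ (P (p.succAbove (q.succAbove a)) - P p)
        (P (p.succAbove (q.succAbove b)) - P (p.succAbove q))).det := by
  rw [adjugate_fin_succ_eq_det_submatrix, bordered_submatrix_succAbove,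
    det_bordered _ (q.predAbove p) q, Fin.val_succ, Fin.val_succ]
  simp only [submatrix_apply, of_apply, Fin.succAbove_succAbove_predAbove,
    Fin.succAbove_succAbove_succAbove_predAbove, real_inner_sub_sub_eq_norm_sq]
  have hsign : (-1 : ℝ) ^ ((p.succAbove q : ℕ) + 1 + (p + 1)) * -(-1) ^ ((q.predAbove p : ℕ) + q)
      = 1 :=
    calc _ = -((-1 : ℝ) ^ ((p.succAbove q : ℕ) + q.predAbove p) * (-1) ^ ((p : ℕ) + q)) := by ring
      _ = ((-1 : ℝ) ^ ((p : ℕ) + q)) ^ 2 := by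
        rw [Fin.neg_one_pow_succAbove_add_predAbove]; ring
      _ = 1 := by rw [← pow_mul, pow_mul']; norm_num
  rw [← mul_assoc, hsign, one_mul]
  congr 1
  ext a b
  simp only [of_apply]
  ring

section modSqDist

variable {n k : ℕ} (P : Fin (k + 1) → EuclideanSpace ℝ (Fin n)) (i j : Fin (k + 1)) (s : ℝ)

theorem modSqDist_self (u : Fin (k + 1)) : modSqDist P i j s u u = 0 := if_pos rfl

theorem modSqDist_comm (u v : Fin (k + 1)) : modSqDist P i j s u v = modSqDist P i j s v u := by
  unfold modSqDist
  simp only [eq_comm (a := u), norm_sub_rev (P u)]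
  congr 1
  exact if_congr (by tauto) rfl rfl

theorem bordered_negHalf_modSqDist (hij : i ≠ j) :
    bordered (of fun u v => -modSqDist P i j s u v / 2) =
      bordered (of fun u v => -‖P u - P v‖ ^ 2 / 2)
        + s • (single i.succ j.succ (-1 / 2) + single j.succ i.succ (-1 / 2)) := by
  ext x y
  cases x using Fin.cases with
  | zero => cases y using Fin.cases <;> simp
  | succ u =>
    cases y using Fin.cases with
    | zero => simp
    | succ v =>
      simp only [bordered_succ_succ, of_apply, modSqDist, Matrix.add_apply, Matrix.smul_apply,
        single_apply, Fin.succ_inj, smul_eq_mul]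
      split_ifs <;> simp_all <;> grind

end modSqDist

/-- The derivative at `s = 0` of the determinant of the Gram-type matrix
`G(s)_{ab} = (L(s)_{1a} + L(s)_{1b} − L(s)_{ab})/2` built from the modified squared
distances equals `det(⟨P_a − P_i, P_b − P_j⟩)` with `a, b` running over the indices
other than `i` and `j`. -/
theorem deriv_gram_det_sq_dist {n k : ℕ} (P : Fin (k + 1) → EuclideanSpace ℝ (Fin n))
    (i j : Fin (k + 1)) (hij : i < j) :
    HasDerivAt
      (fun s : ℝ => Matrix.det (Matrix.of fun a b : Fin k =>
        (modSqDist P i j s 0 a.succ + modSqDist P i j s 0 b.succ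
          - modSqDist P i j s a.succ b.succ) / 2))
      (Matrix.det (Matrix.of fun (a b : {x : Fin (k + 1) // x ≠ i ∧ x ≠ j}) =>
        (inner ℝ (P a.1 - P i) (P b.1 - P j) : ℝ)))
      0 := by
  obtain ⟨m, rfl⟩ : ∃ m, k = m + 1 := ⟨k - 1, by have : (i : ℕ) < j := hij; omega⟩
  obtain ⟨q, rfl⟩ := Fin.exists_succAbove_eq hij.ne'
  set j := i.succAbove q
  set B := bordered (of fun u v => -‖P u - P v‖ ^ 2 / 2)
  set D := single i.succ j.succ (-1 / 2 : ℝ) + single j.succ i.succ (-1 / 2)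
  have hpath (s : ℝ) : (of fun a b : Fin (m + 1) => (modSqDist P i j s 0 a.succ
      + modSqDist P i j s 0 b.succ - modSqDist P i j s a.succ b.succ) / 2).det
      = -(B + s • D).det := by
    rw [det_gram_eq_neg_det_bordered _ (modSqDist_self ..) (modSqDist_comm P _ _ s · 0),
      bordered_negHalf_modSqDist P i j s hij.ne]
  have hB : Bᵀ = B := by
    rw [bordered_transpose]; congr 1; ext u v; simp [norm_sub_rev]
  refine ((hasDerivAt_det_add_smul B D).neg.congr_of_eventuallyEq
    (Filter.Eventually.of_forall hpath)).congr_deriv ?_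
  have htrace : trace (adjugate B * D) = -adjugate B i.succ j.succ := by
    rw [mul_add, trace_add, trace_mul_single, trace_mul_single, ← transpose_apply (adjugate B),
      adjugate_transpose, hB, op_smul_eq_mul]
    ring
  rw [htrace, neg_neg, adjugate_bordered_negHalfSqDist,
    ← det_submatrix_equiv_self (Fin.succAboveSuccAboveEquiv i q)]
  rfl
end

section
/- Let A₁,…,A_{n+2} be points in ℝ^d (regarded as vectors) and let α₁,…,α_{n+2} be real numbers with Σᵢ αᵢ = 0 and Σᵢ αᵢAᵢ = 0. For 1 ≤ k ≤ n and points P, Q ∈ ℝ^d define c_k(P,Q) := Σ_{1≤i₁<⋯<i_k≤n+2} α_{i₁}⋯α_{i_k} · det(⟨A_{i_a} − P, A_{i_b} − Q⟩)_{1≤a,b≤k}. Then c_k(P,Q) is independent of the choice of P and Q, i.e. c_k(P,Q) = c_k(P',Q') for all P, Q, P', Q' ∈ ℝ^d. -/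
/-- `c_k(P,Q) = Σ_{i₁<⋯<i_k} α_{i₁}⋯α_{i_k} det(⟨A_{i_a} − P, A_{i_b} − Q⟩)_{a,b}`, where the
determinant is taken over the matrix indexed by the `k`-element subset `s = {i₁ < ⋯ < i_k}`
(its determinant is independent of the chosen ordering of the index set since rows and
columns are indexed alike). -/
noncomputable def cConst {n d : ℕ} (A : Fin (n + 2) → EuclideanSpace ℝ (Fin d))
    (α : Fin (n + 2) → ℝ) (k : ℕ) (P Q : EuclideanSpace ℝ (Fin d)) : ℝ :=
  ∑ s ∈ Finset.powersetCard k (Finset.univ : Finset (Fin (n + 2))),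
    (∏ i ∈ s, α i) *
      Matrix.det (Matrix.of fun (a b : ↥s) => (inner ℝ (A a.1 - P) (A b.1 - Q) : ℝ))

/-!
Summing principal minors, `c_k(P,Q)` is the coefficient of `X^k` in `det (1 + X • D_α G)`, where
`D_α = diagonal α` and `G = (⟨A_i − P, A_j − Q⟩)_{ij} = V_P V_Qᵀ`, the rows of `V_P` being the
vectors `A_i − P`. By the Weinstein–Aronszajn identity this is `det (1 + X • V_Qᵀ D_α V_P)`, and
the `d × d` matrix `V_Qᵀ D_α V_P = Σᵢ αᵢ (Aᵢ − Q)(Aᵢ − P)ᵀ` does not depend on `P` and `Q`,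
since `Σᵢ αᵢ = 0` and `Σᵢ αᵢ Aᵢ = 0` kill the terms involving them.
-/

open Finset Matrix Polynomial WithLp

theorem Finset.sum_mul_sub_mul_sub_of_sum_eq_zero {ι R : Type*} [CommRing R] (s : Finset ι)
    (α x y : ι → R) (p q : R) (hα : ∑ i ∈ s, α i = 0) (hx : ∑ i ∈ s, α i * x i = 0)
    (hy : ∑ i ∈ s, α i * y i = 0) :
    ∑ i ∈ s, α i * (x i - p) * (y i - q) = ∑ i ∈ s, α i * x i * y i := by
  have expand : ∀ i, α i * (x i - p) * (y i - q) =
      α i * x i * y i - q * (α i * x i) - p * (α i * y i) + p * q * α i := fun i => by ring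
  simp only [expand, sum_add_distrib, sum_sub_distrib, ← mul_sum, hα, hx, hy]
  ring

namespace Matrix

variable {m ι R : Type*} [CommRing R] [Fintype ι] [DecidableEq ι]

theorem det_submatrix_diagonal_mul (c : ι → R) (M : Matrix ι ι R) (s : Finset ι) :
    ((diagonal c * M).submatrix ((↑) : s → ι) (↑)).det =
      (∏ i ∈ s, c i) * (M.submatrix ((↑) : s → ι) (↑)).det := by
  have : (diagonal c * M).submatrix ((↑) : s → ι) (↑) =
      diagonal (fun i : s => c i) * M.submatrix (↑) (↑) := by
    ext a b
    simp [diagonal_mul]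
  rw [this, det_mul, det_diagonal, prod_coe_sort s c]

theorem det_one_add_X_smul_mul_comm [Fintype m] [DecidableEq m] (M : Matrix ι m R)
    (N : Matrix m ι R) :
    det (1 + (X : R[X]) • (M * N).map C) = det (1 + (X : R[X]) • (N * M).map C) := by
  rw [Matrix.map_mul, Matrix.map_mul, ← smul_mul, det_one_add_mul_comm, Matrix.mul_smul]

theorem transpose_of_sub_mul_diagonal_mul_of_sub [Fintype m] (α : ι → R) (a : ι → m → R)
    (hα : ∑ i, α i = 0) (ha : ∑ i, α i • a i = 0) (p q : m → R) :
    (of fun i => a i - q)ᵀ * diagonal α * of (fun i => a i - p) =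
      (of a)ᵀ * diagonal α * of a := by
  have hcoord : ∀ t, ∑ i, α i * a i t = 0 := fun t => by
    simpa using congrFun ha t
  ext t u
  rw [mul_apply, mul_apply]
  simp only [mul_diagonal, transpose_apply, of_apply, Pi.sub_apply]
  convert sum_mul_sub_mul_sub_of_sum_eq_zero univ α (a · t) (a · u) (q t) (p u) hα (hcoord t)
    (hcoord u) using 2 <;> ring

end Matrix

theorem EuclideanSpace.of_inner_eq_mul_transpose {ι n : Type*} [Fintype ι]
    (v w : n → EuclideanSpace ℝ ι) :
    of (fun i j => inner ℝ (v i) (w j)) =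
      (of fun i => ofLp (v i)) * (of fun j => ofLp (w j))ᵀ := by
  ext i j
  simp [EuclideanSpace.inner_eq_star_dotProduct, mul_apply, dotProduct, mul_comm]

theorem cConst_eq_coeff_det {n d : ℕ} (A : Fin (n + 2) → EuclideanSpace ℝ (Fin d))
    (α : Fin (n + 2) → ℝ) (k : ℕ) (P Q : EuclideanSpace ℝ (Fin d)) :
    cConst A α k P Q = (det (1 + (X : ℝ[X]) • ((of fun i => ofLp (A i) - ofLp Q)ᵀ *
      diagonal α * of fun i => ofLp (A i) - ofLp P).map C)).coeff k := by
  rw [Matrix.mul_assoc, det_one_add_X_smul_mul_comm, coeff_det_one_add_X_smul_eq_sum_minors,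
    cConst]
  refine sum_congr rfl fun s _ => ?_
  rw [Matrix.mul_assoc, det_submatrix_diagonal_mul]
  congr 2
  exact congrArg (·.submatrix Subtype.val Subtype.val)
    (EuclideanSpace.of_inner_eq_mul_transpose (A · - P) (A · - Q))

theorem cConst_independent_general {n d : ℕ} (A : Fin (n + 2) → EuclideanSpace ℝ (Fin d))
    (α : Fin (n + 2) → ℝ) (hsum : ∑ i, α i = 0) (hsum2 : ∑ i, α i • A i = 0)
    (k : ℕ)
    (P Q P' Q' : EuclideanSpace ℝ (Fin d)) :
    cConst A α k P Q = cConst A α k P' Q' := by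
  have hsum2' : ∑ i, α i • ofLp (A i) = 0 := by
    simpa [ofLp_sum] using congrArg ofLp hsum2
  simp only [cConst_eq_coeff_det, transpose_of_sub_mul_diagonal_mul_of_sub α _ hsum hsum2']

/-- If `Σᵢ αᵢ = 0` and `Σᵢ αᵢAᵢ = 0`, then for `1 ≤ k ≤ n` the quantity `c_k(P,Q)` is
independent of the choice of the points `P` and `Q`. -/
theorem cConst_independent {n d : ℕ} (A : Fin (n + 2) → EuclideanSpace ℝ (Fin d))
    (α : Fin (n + 2) → ℝ) (hsum : ∑ i, α i = 0) (hsum2 : ∑ i, α i • A i = 0)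
    (k : ℕ) (hk1 : 1 ≤ k) (hkn : k ≤ n)
    (P Q P' Q' : EuclideanSpace ℝ (Fin d)) :
    cConst A α k P Q = cConst A α k P' Q' :=
  cConst_independent_general A α hsum hsum2 k P Q P' Q'
end

section
/- Let A₁,…,A_{n+2} be points in ℝⁿ in general position and let α₁,…,α_{n+2} be nonzero reals with Σᵢ αᵢ = 0 and Σᵢ αᵢAᵢ = 0. Then, with vol denoting n-dimensional Lebesgue measure, Σ_{i : αᵢ > 0} vol(conv{A_j : j ≠ i}) = Σ_{i : αᵢ < 0} vol(conv{A_j : j ≠ i}) = vol(conv{A₁,…,A_{n+2}}); i.e., the n-faces of the degenerate (n+1)-simplex split into two groups according to the sign of the coefficient of the omitted vertex, and the total volume of each group equals the volume of the convex hull of all n+2 points. -/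
/-!
Subtracting from the barycentric weights of a point of the hull the largest multiple of `α`
that keeps them nonnegative kills the weight of some vertex with `αᵢ > 0`, so the faces opposite
these vertices cover the hull. Two of them meet only in the hull of the remaining `n` points: a
common point has two weightings whose difference is an affine dependence, hence a multiple of `α`,
and the signs at the two omitted vertices force that multiple to vanish. Those `n` points span a
proper affine subspace, which is Lebesgue-null. Replacing `α` by `-α` gives the other half.
-/

open MeasureTheory

/-- Points `A₁, …, A_m` in `ℝ^d` are in general position if every `d+1` of them are
affinely independent. -/
def InGeneralPosition {d m : ℕ} (A : Fin m → EuclideanSpace ℝ (Fin d)) : Prop :=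
  ∀ s : Finset (Fin m), s.card = d + 1 → AffineIndependent ℝ (fun i : ↥s => A i.1)

open Finset

section AffineDependence

variable {ι E : Type*} [Fintype ι] [AddCommGroup E] [Module ℝ E]

theorem mem_convexHull_image_iff_exists_weights {A : ι → E} {S : Set ι} {x : E} :
    x ∈ convexHull ℝ (A '' S) ↔ ∃ w : ι → ℝ, (∀ j, 0 ≤ w j) ∧ (∀ j ∉ S, w j = 0) ∧
      ∑ j, w j = 1 ∧ ∑ j, w j • A j = x := by
  classical
  constructor
  · intro hx
    refine convexHull_min (t := {y | ∃ w : ι → ℝ, (∀ j, 0 ≤ w j) ∧ (∀ j ∉ S, w j = 0) ∧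
      ∑ j, w j = 1 ∧ ∑ j, w j • A j = y}) ?_ ?_ hx
    · rintro _ ⟨i, hi, rfl⟩
      refine ⟨Pi.single i 1, fun j => ?_, fun j hj => ?_, by simp, by simp⟩
      · by_cases h : j = i <;> simp [h]
      · simp [show j ≠ i from fun h => hj (h ▸ hi)]
    · rintro _ ⟨w, hw0, hwS, hw1, rfl⟩ _ ⟨v, hv0, hvS, hv1, rfl⟩ a b ha hb hab
      refine ⟨a • w + b • v, fun j => ?_, fun j hj => ?_, ?_, ?_⟩
      · have := hw0 j; have := hv0 j; simp only [Pi.add_apply, Pi.smul_apply, smul_eq_mul]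
        positivity
      · simp [hwS j hj, hvS j hj]
      · simp [sum_add_distrib, ← mul_sum, hw1, hv1, hab]
      · simp [add_smul, mul_smul, sum_add_distrib, ← smul_sum]
  · rintro ⟨w, hw0, hwS, hw1, rfl⟩
    rw [← sum_filter_of_ne fun j _ h => by_contra fun hj => h (by rw [hwS j hj, zero_smul])]
    rw [← sum_filter_of_ne fun j _ h => by_contra fun hj => h (hwS j hj)] at hw1
    exact (convex_convexHull ℝ _).sum_mem (fun j _ => hw0 j) hw1
      fun j hj => subset_convexHull ℝ _ (Set.mem_image_of_mem A (mem_filter.1 hj).2)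

variable {A : ι → E} {α : ι → ℝ}

theorem convexHull_range_eq_biUnion_faces (hα : α ≠ 0) (hsum : ∑ i, α i = 0)
    (hsumA : ∑ i, α i • A i = 0) :
    convexHull ℝ (Set.range A) =
      ⋃ i ∈ univ.filter (fun i => 0 < α i), convexHull ℝ (A '' {j | j ≠ i}) := by
  refine subset_antisymm (fun x hx => ?_)
    (Set.iUnion₂_subset fun i _ => convexHull_mono (Set.image_subset_range _ _))
  rw [← Set.image_univ, mem_convexHull_image_iff_exists_weights] at hx
  obtain ⟨w, hw0, -, hw1, rfl⟩ := hx
  obtain ⟨i₀, -, hi₀⟩ := exists_pos_of_sum_zero_of_exists_nonzero α hsum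
    (by simpa [funext_iff] using hα)
  have hpos : (univ.filter fun i => 0 < α i).Nonempty := ⟨i₀, by simpa using hi₀⟩
  -- remove from `w` the largest multiple `t • α` that keeps all weights nonnegative
  obtain ⟨i, hi, hmin⟩ := exists_min_image _ (fun j => w j / α j) hpos
  have hαi : 0 < α i := (mem_filter.1 hi).2
  set t := w i / α i
  refine Set.mem_biUnion hi (mem_convexHull_image_iff_exists_weights.2
    ⟨w - t • α, fun j => ?_, fun j hj => ?_, ?_, ?_⟩)
  · rcases le_or_gt (α j) 0 with hj | hj
    · have : 0 ≤ t := div_nonneg (hw0 i) hαi.le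
      simp only [Pi.sub_apply, Pi.smul_apply, smul_eq_mul, sub_nonneg]
      nlinarith [hw0 j]
    · have := (le_div_iff₀ hj).1 (hmin j (mem_filter.2 ⟨mem_univ _, hj⟩))
      simp only [Pi.sub_apply, Pi.smul_apply, smul_eq_mul, sub_nonneg]
      linarith
  · obtain rfl : j = i := by simpa using hj
    simp [t, div_mul_cancel₀ _ hαi.ne']
  · simp [sum_sub_distrib, ← mul_sum, hsum, hw1]
  · simp [sub_smul, mul_smul, sum_sub_distrib, ← smul_sum, hsumA]

theorem exists_eq_smul_of_affineIndependent_erase [DecidableEq ι] {i : ι}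
    (hA : AffineIndependent ℝ (fun k : ↥(univ.erase i) => A k)) (hαi : α i ≠ 0)
    (hsum : ∑ k, α k = 0) (hsumA : ∑ k, α k • A k = 0) {β : ι → ℝ}
    (hβ : ∑ k, β k = 0) (hβA : ∑ k, β k • A k = 0) : ∃ c : ℝ, β = c • α := by
  set c := β i / α i
  set γ := β - c • α
  have hγi : γ i = 0 := by simp [γ, c, div_mul_cancel₀ _ hαi]
  have hγ : ∑ k ∈ univ.erase i, γ k = 0 := by
    rw [sum_erase _ hγi]
    simp [γ, sum_sub_distrib, ← mul_sum, hsum, hβ]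
  have hγA : ∑ k ∈ univ.erase i, γ k • A k = 0 := by
    rw [sum_erase _ (by simp [hγi])]
    simp [γ, sub_smul, mul_smul, sum_sub_distrib, ← smul_sum, hsumA, hβA]
  have hγ0 := hA.eq_zero_of_sum_eq_zero (s := univ) (w := fun k : ↥(univ.erase i) => γ k)
    (by rwa [sum_coe_sort (univ.erase i) γ])
    (by rwa [sum_coe_sort (univ.erase i) (fun k => γ k • A k)])
  refine ⟨c, funext fun k => sub_eq_zero.1 ?_⟩
  by_cases hk : k = i
  · exact hk ▸ hγi
  · exact hγ0 ⟨k, by simp [hk]⟩ (mem_univ _)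

theorem faces_inter_subset_of_pos
    (huniq : ∀ β : ι → ℝ, ∑ k, β k = 0 → ∑ k, β k • A k = 0 → ∃ c : ℝ, β = c • α)
    {i j : ι} (hi : 0 < α i) (hj : 0 < α j) :
    convexHull ℝ (A '' {k | k ≠ i}) ∩ convexHull ℝ (A '' {k | k ≠ j}) ⊆
      convexHull ℝ (A '' {i, j}ᶜ) := by
  rintro x ⟨hxi, hxj⟩
  obtain ⟨w, hw0, hwi, hw1, hwx⟩ := mem_convexHull_image_iff_exists_weights.1 hxi
  obtain ⟨v, hv0, hvj, hv1, hvx⟩ := mem_convexHull_image_iff_exists_weights.1 hxj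
  obtain ⟨c, hc⟩ := huniq (w - v) (by simp [sum_sub_distrib, hw1, hv1])
    (by simp [sub_smul, sum_sub_distrib, hwx, hvx])
  have hci : w i - v i = c * α i := congr_fun hc i
  have hcj : w j - v j = c * α j := congr_fun hc j
  have hwi0 : w i = 0 := hwi i (by simp)
  have hvj0 : v j = 0 := hvj j (by simp)
  -- `c * α i = -v i ≤ 0` and `c * α j = w j ≥ 0`
  have hc0 : c = 0 := by
    rcases lt_trichotomy c 0 with h | h | h
    · nlinarith [hw0 j]
    · exact h
    · nlinarith [hv0 i]
  have hwv : w = v := by simpa [hc0, sub_eq_zero] using hc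
  refine mem_convexHull_image_iff_exists_weights.2 ⟨w, hw0, fun k hk => ?_, hw1, hwx⟩
  simp only [Set.mem_compl_iff, not_not, Set.mem_insert_iff, Set.mem_singleton_iff] at hk
  rcases hk with rfl | rfl
  · exact hwi0
  · rw [hwv]; exact hvj0

end AffineDependence

theorem addHaar_convexHull_image_eq_zero {ι E : Type*} [NormedAddCommGroup E] [NormedSpace ℝ E]
    [MeasurableSpace E] [BorelSpace E] [FiniteDimensional ℝ E] (μ : Measure E)
    [μ.IsAddHaarMeasure] (A : ι → E) (s : Finset ι) (hs : #s ≤ Module.finrank ℝ E) :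
    μ (convexHull ℝ (A '' s)) = 0 := by
  classical
  refine measure_mono_null (convexHull_subset_affineSpan _) (Measure.addHaar_affineSubspace μ _ ?_)
  rcases s.eq_empty_or_nonempty with rfl | hne
  · simp
  obtain ⟨m, hm⟩ := Nat.exists_eq_succ_of_ne_zero hne.card_pos.ne'
  intro htop
  have hspan := finrank_vectorSpan_image_finset_le ℝ A s hm
  rw [coe_image, ← direction_affineSpan, htop, AffineSubspace.direction_top, finrank_top] at hspan
  omega

theorem InGeneralPosition.exists_eq_smul {n : ℕ} {A : Fin (n + 2) → EuclideanSpace ℝ (Fin n)}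
    (hgp : InGeneralPosition A) {α : Fin (n + 2) → ℝ} (hα0 : α 0 ≠ 0) (hsum : ∑ i, α i = 0)
    (hsumA : ∑ i, α i • A i = 0) {β : Fin (n + 2) → ℝ} (hβ : ∑ i, β i = 0)
    (hβA : ∑ i, β i • A i = 0) : ∃ c : ℝ, β = c • α :=
  exists_eq_smul_of_affineIndependent_erase (hgp _ (by simp)) hα0 hsum hsumA hβ hβA

theorem sum_volume_faces_of_pos {n : ℕ} {A : Fin (n + 2) → EuclideanSpace ℝ (Fin n)}
    (hgp : InGeneralPosition A) {α : Fin (n + 2) → ℝ} (hα0 : α 0 ≠ 0)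
    (hsum : ∑ i, α i = 0) (hsumA : ∑ i, α i • A i = 0) :
    ∑ i ∈ univ.filter (fun i => 0 < α i), volume (convexHull ℝ (A '' {j | j ≠ i})) =
      volume (convexHull ℝ (Set.range A)) := by
  rw [convexHull_range_eq_biUnion_faces (fun h => hα0 (congr_fun h 0)) hsum hsumA,
    measure_biUnion_finset₀ _ fun i _ =>
      ((Set.toFinite _).isClosed_convexHull (𝕜 := ℝ)).measurableSet.nullMeasurableSet]
  intro i hi j hj hij
  refine measure_mono_null (faces_inter_subset_of_pos
    (fun β hβ hβA => hgp.exists_eq_smul hα0 hsum hsumA hβ hβA) (mem_filter.1 hi).2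
    (mem_filter.1 hj).2) ?_
  rw [← coe_pair, ← coe_compl]
  refine addHaar_convexHull_image_eq_zero volume A _ ?_
  rw [card_compl, card_pair hij]
  simp

theorem sum_faces_volume_eq_general {n : ℕ}
    (A : Fin (n + 2) → EuclideanSpace ℝ (Fin n))
    (hgp : InGeneralPosition A)
    (α : Fin (n + 2) → ℝ) (hα : ∀ i, α i ≠ 0)
    (hsum : ∑ i, α i = 0) (hsum2 : ∑ i, α i • A i = 0) :
    (∑ i ∈ Finset.univ.filter (fun i => 0 < α i),
        volume (convexHull ℝ (A '' {j | j ≠ i}))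
      = volume (convexHull ℝ (Set.range A))) ∧
    (∑ i ∈ Finset.univ.filter (fun i => α i < 0),
        volume (convexHull ℝ (A '' {j | j ≠ i}))
      = volume (convexHull ℝ (Set.range A))) := by
  refine ⟨sum_volume_faces_of_pos hgp (hα 0) hsum hsum2, ?_⟩
  have hneg := sum_volume_faces_of_pos hgp (α := -α) (neg_ne_zero.2 (hα 0)) (by simp [hsum])
    (by simp [hsum2])
  simpa using hneg

/-- For a degenerate `(n+1)`-simplex in `ℝⁿ`, the total volume of the `n`-faces obtained by
omitting a vertex with positive coefficient equals the total volume of the `n`-faces obtained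
by omitting a vertex with negative coefficient, and both equal the volume of the convex hull
of all `n+2` points. -/
theorem sum_faces_volume_eq {n : ℕ} (hn : 1 ≤ n)
    (A : Fin (n + 2) → EuclideanSpace ℝ (Fin n))
    (hgp : InGeneralPosition A)
    (α : Fin (n + 2) → ℝ) (hα : ∀ i, α i ≠ 0)
    (hsum : ∑ i, α i = 0) (hsum2 : ∑ i, α i • A i = 0) :
    (∑ i ∈ Finset.univ.filter (fun i => 0 < α i),
        volume (convexHull ℝ (A '' {j | j ≠ i}))
      = volume (convexHull ℝ (Set.range A))) ∧
    (∑ i ∈ Finset.univ.filter (fun i => α i < 0),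
        volume (convexHull ℝ (A '' {j | j ≠ i}))
      = volume (convexHull ℝ (Set.range A))) :=
  sum_faces_volume_eq_general A hgp α hα hsum hsum2
end

section
/- Let A₁,…,A_{n+2} be points on the unit sphere Sⁿ of ℝ^{n+1} in general position, and let α₁,…,α_{n+2} be nonzero reals with Σᵢ αᵢAᵢ = 0. Regard ℝ^{n+1} as a subspace of ℝ^{n+2}, so the Aᵢ lie on the unit sphere S^{n+1} of ℝ^{n+2}. Suppose B₁,…,B_{n+2} are points on the unit sphere S^{n+1} of ℝ^{n+2} satisfying the tensegrity constraints of G_{n,1}: ‖Bᵢ − B_j‖ ≤ ‖Aᵢ − A_j‖ whenever αᵢα_j < 0, and ‖Bᵢ − B_j‖ ≥ ‖Aᵢ − A_j‖ whenever αᵢα_j > 0. Then ‖Bᵢ − B_j‖ = ‖Aᵢ − A_j‖ for all i, j; i.e. G_{n,1} is globally rigid in S^{n+1}. -/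
/-!
Stress-energy argument. For unit vectors `X` the energy `∑ₚ∑_q αₚα_q ‖Xₚ - X_q‖²` equals
`2 (∑ α)² - 2 ‖∑ αₖ Xₖ‖²`, so it is maximal exactly at equilibrium configurations, such as `A`.
The cable and strut constraints make every term of the energy of `B` at least the corresponding
term for `A`; since the total cannot increase, every term is unchanged.
-/

/-- Points on the unit sphere of `ℝ^{d}` are in spherical general position if every `d` of
them are linearly independent. -/
def SphGeneralPosition {d m : ℕ} (A : Fin m → EuclideanSpace ℝ (Fin d)) : Prop :=
  ∀ s : Finset (Fin m), s.card = d → LinearIndependent ℝ (fun i : ↥s => A i.1)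

section Energy

variable {ι E : Type*} [Fintype ι] [NormedAddCommGroup E] [InnerProductSpace ℝ E]

theorem sum_sum_mul_mul_norm_sub_sq_of_norm_eq_one (α : ι → ℝ) {X : ι → E}
    (hX : ∀ k, ‖X k‖ = 1) :
    ∑ p, ∑ q, α p * α q * ‖X p - X q‖ ^ 2 = 2 * (∑ k, α k) ^ 2 - 2 * ‖∑ k, α k • X k‖ ^ 2 := by
  have hsq : ‖∑ k, α k • X k‖ ^ 2 = ∑ p, ∑ q, α p * α q * inner ℝ (X p) (X q) := by
    rw [← real_inner_self_eq_norm_sq, sum_inner]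
    refine Finset.sum_congr rfl fun p _ => ?_
    rw [inner_sum]
    refine Finset.sum_congr rfl fun q _ => ?_
    rw [real_inner_smul_left, real_inner_smul_right, mul_assoc]
  rw [hsq, sq, Finset.sum_mul_sum, Finset.mul_sum, Finset.mul_sum, ← Finset.sum_sub_distrib]
  refine Finset.sum_congr rfl fun p _ => ?_
  rw [Finset.mul_sum, Finset.mul_sum, ← Finset.sum_sub_distrib]
  refine Finset.sum_congr rfl fun q _ => ?_
  rw [norm_sub_sq_real, hX, hX]
  ring

theorem sum_sum_mul_mul_norm_sub_sq_le_of_sum_smul_eq_zero {F : Type*} [NormedAddCommGroup F]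
    [InnerProductSpace ℝ F] (α : ι → ℝ) {X : ι → E} {Y : ι → F}
    (hX : ∀ k, ‖X k‖ = 1) (hY : ∀ k, ‖Y k‖ = 1) (hXα : ∑ k, α k • X k = 0) :
    ∑ p, ∑ q, α p * α q * ‖Y p - Y q‖ ^ 2 ≤ ∑ p, ∑ q, α p * α q * ‖X p - X q‖ ^ 2 := by
  rw [sum_sum_mul_mul_norm_sub_sq_of_norm_eq_one α hX,
    sum_sum_mul_mul_norm_sub_sq_of_norm_eq_one α hY, hXα, norm_zero]
  nlinarith [sq_nonneg ‖∑ k, α k • Y k‖]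

end Energy

theorem eq_zero_of_sum_sum_nonpos {ι : Type*} [Fintype ι] {f : ι → ι → ℝ}
    (hf : ∀ p q, 0 ≤ f p q) (h : ∑ p, ∑ q, f p q ≤ 0) (p q : ι) : f p q = 0 := by
  rw [← Fintype.sum_prod_type'] at h
  have hzero := (Fintype.sum_eq_zero_iff_of_nonneg fun x : ι × ι => hf x.1 x.2).mp
    (le_antisymm h (Finset.sum_nonneg fun x _ => hf x.1 x.2))
  exact congrFun hzero (p, q)

theorem mul_sq_sub_sq_nonneg_of_sign {a c d : ℝ} (hc : 0 ≤ c) (hd : 0 ≤ d)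
    (hneg : a < 0 → c ≤ d) (hpos : 0 < a → d ≤ c) : 0 ≤ a * (c ^ 2 - d ^ 2) := by
  rcases lt_trichotomy a 0 with ha | rfl | ha
  · have := pow_le_pow_left₀ hc (hneg ha) 2
    nlinarith
  · simp
  · have := pow_le_pow_left₀ hd (hpos ha) 2
    nlinarith

theorem G_n1_globally_rigid_sphere_general {n : ℕ}
    (A : Fin (n + 2) → EuclideanSpace ℝ (Fin (n + 1)))
    (hA : ∀ i, ‖A i‖ = 1)
    (α : Fin (n + 2) → ℝ) (hα : ∀ i, α i ≠ 0)
    (hsum : ∑ i, α i • A i = 0)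
    (B : Fin (n + 2) → EuclideanSpace ℝ (Fin (n + 2)))
    (hB : ∀ i, ‖B i‖ = 1)
    (hcable : ∀ i j, α i * α j < 0 → ‖B i - B j‖ ≤ ‖A i - A j‖)
    (hstrut : ∀ i j, 0 < α i * α j → ‖A i - A j‖ ≤ ‖B i - B j‖) :
    ∀ i j, ‖B i - B j‖ = ‖A i - A j‖ := by
  intro i j
  have hterm : ∀ p q, 0 ≤ α p * α q * (‖B p - B q‖ ^ 2 - ‖A p - A q‖ ^ 2) := fun p q =>
    mul_sq_sub_sq_nonneg_of_sign (norm_nonneg _) (norm_nonneg _) (hcable p q) (hstrut p q)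
  have htotal : ∑ p, ∑ q, α p * α q * (‖B p - B q‖ ^ 2 - ‖A p - A q‖ ^ 2) ≤ 0 := by
    simp only [mul_sub, Finset.sum_sub_distrib, sub_nonpos]
    exact sum_sum_mul_mul_norm_sub_sq_le_of_sum_smul_eq_zero α hA hB hsum
  have hij := eq_zero_of_sum_sum_nonpos hterm htotal i j
  rw [mul_eq_zero, sub_eq_zero] at hij
  exact (pow_left_inj₀ (norm_nonneg _) (norm_nonneg _) two_ne_zero).mp
    (hij.resolve_left (mul_ne_zero (hα i) (hα j)))

/-- The framework `G_{n,1}` is globally rigid in `S^{n+1}`: if points `B₁, …, B_{n+2}` on the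
unit sphere of `ℝ^{n+2}` satisfy the cable-strut constraints determined by the signs of
`αᵢα_j`, then all the distances are preserved. -/
theorem G_n1_globally_rigid_sphere {n : ℕ}
    (A : Fin (n + 2) → EuclideanSpace ℝ (Fin (n + 1)))
    (hA : ∀ i, ‖A i‖ = 1)
    (hgp : SphGeneralPosition A)
    (α : Fin (n + 2) → ℝ) (hα : ∀ i, α i ≠ 0)
    (hsum : ∑ i, α i • A i = 0)
    (B : Fin (n + 2) → EuclideanSpace ℝ (Fin (n + 2)))
    (hB : ∀ i, ‖B i‖ = 1)
    (hcable : ∀ i j, α i * α j < 0 → ‖B i - B j‖ ≤ ‖A i - A j‖)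
    (hstrut : ∀ i j, 0 < α i * α j → ‖A i - A j‖ ≤ ‖B i - B j‖) :
    ∀ i j, ‖B i - B j‖ = ‖A i - A j‖ :=
  G_n1_globally_rigid_sphere_general A hA α hα hsum B hB hcable hstrut
end

section
/- Let e be a fixed unit vector of ℝ^{n+1} and let Sⁿ₊ := {x ∈ Sⁿ : ⟨x,e⟩ > 0} be the corresponding open hemisphere of the unit sphere Sⁿ ⊂ ℝ^{n+1}. Let A₁,…,A_{n+2} ∈ Sⁿ₊ be in general position and α₁,…,α_{n+2} nonzero reals with Σᵢ αᵢAᵢ = 0. Suppose B₁,…,B_{n+2} : [0,1] → Sⁿ₊ are continuous maps with Bᵢ(0) = Aᵢ that satisfy, for all t ∈ [0,1], the tensegrity constraints of F_{n,1}: ‖Bᵢ(t) − B_j(t)‖ ≥ ‖Aᵢ − A_j‖ whenever αᵢα_j < 0, and ‖Bᵢ(t) − B_j(t)‖ ≤ ‖Aᵢ − A_j‖ whenever αᵢα_j > 0. Then ‖Bᵢ(t) − B_j(t)‖ = ‖Aᵢ − A_j‖ for all i, j and all t ∈ [0,1]; i.e. F_{n,1} is rigid in the open hemisphere Sⁿ₊.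 -/
open Finset RealInnerProductSpace

section InnerProduct

variable {ι E F : Type*} [Fintype ι] [NormedAddCommGroup E] [InnerProductSpace ℝ E]
  [NormedAddCommGroup F] [InnerProductSpace ℝ F]

theorem inner_sum_smul_sum_smul (c : ι → ℝ) (v : ι → E) :
    ⟪∑ i, c i • v i, ∑ j, c j • v j⟫ = ∑ i, ∑ j, c i * c j * ⟪v i, v j⟫ := by
  simp_rw [sum_inner, inner_sum, real_inner_smul_left, real_inner_smul_right, mul_assoc]

theorem sum_smul_eq_zero_of_inner_eq {b : ι → E} {A : ι → F}
    (hG : ∀ i j, ⟪b i, b j⟫ = ⟪A i, A j⟫) {c : ι → ℝ} (hc : ∑ i, c i • b i = 0) :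
    ∑ i, c i • A i = 0 := by
  rw [← inner_self_eq_zero (𝕜 := ℝ), inner_sum_smul_sum_smul]
  simp_rw [← hG]
  rw [← inner_sum_smul_sum_smul, hc, inner_zero_left]

theorem LinearIndependent.of_inner_eq {b : ι → E} {A : ι → F}
    (hG : ∀ i j, ⟪b i, b j⟫ = ⟪A i, A j⟫) (hA : LinearIndependent ℝ A) :
    LinearIndependent ℝ b :=
  Fintype.linearIndependent_iff.2 fun c hc =>
    Fintype.linearIndependent_iff.1 hA c (sum_smul_eq_zero_of_inner_eq hG hc)

theorem inner_eq_of_sum_smul_eq_zero {b : ι → E} {A : ι → F} {g : ι → ℝ} (hg : ∀ i, g i ≠ 0)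
    (hdep : ∑ i, g i • b i = 0)
    (hle : ∀ i j, g i * g j * ⟪A i, A j⟫ ≤ g i * g j * ⟪b i, b j⟫) (i j : ι) :
    ⟪b i, b j⟫ = ⟪A i, A j⟫ := by
  have hsum : ∑ i, ∑ j, g i * g j * ⟪A i, A j⟫ = ∑ i, ∑ j, g i * g j * ⟪b i, b j⟫ := by
    refine le_antisymm (sum_le_sum fun i _ => sum_le_sum fun j _ => hle i j) ?_
    rw [← inner_sum_smul_sum_smul, ← inner_sum_smul_sum_smul, hdep, inner_zero_left]
    exact real_inner_self_nonneg
  rw [← Fintype.sum_prod_type', ← Fintype.sum_prod_type'] at hsum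
  have hij := (sum_eq_sum_iff_of_le fun p _ => hle p.1 p.2).1 hsum (i, j) (mem_univ _)
  exact (mul_left_cancel₀ (mul_ne_zero (hg i) (hg j)) hij).symm

theorem norm_sub_le_norm_sub_iff_inner_le {x y x' y' : E} (hx : ‖x‖ = 1) (hy : ‖y‖ = 1)
    (hx' : ‖x'‖ = 1) (hy' : ‖y'‖ = 1) : ‖x - y‖ ≤ ‖x' - y'‖ ↔ ⟪x', y'⟫ ≤ ⟪x, y⟫ := by
  rw [← sq_le_sq₀ (norm_nonneg _) (norm_nonneg _), norm_sub_sq_real, norm_sub_sq_real,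
    hx, hy, hx', hy']
  constructor <;> intro h <;> linarith

omit [Fintype ι] in
theorem mul_inner_le_mul_inner_of_tensegrity {A b : ι → E} (hA : ∀ i, ‖A i‖ = 1)
    (hb : ∀ i, ‖b i‖ = 1) {α : ι → ℝ}
    (hstrut : ∀ i j, α i * α j < 0 → ‖A i - A j‖ ≤ ‖b i - b j‖)
    (hcable : ∀ i j, 0 < α i * α j → ‖b i - b j‖ ≤ ‖A i - A j‖)
    {g : ι → ℝ} {i j : ι} (hsign : 0 < g i * g j * (α i * α j)) :
    g i * g j * ⟪A i, A j⟫ ≤ g i * g j * ⟪b i, b j⟫ := by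
  rcases lt_trichotomy (α i * α j) 0 with hα | hα | hα
  · have hin := (norm_sub_le_norm_sub_iff_inner_le (hA i) (hA j) (hb i) (hb j)).1 (hstrut i j hα)
    exact mul_le_mul_of_nonpos_left hin (neg_of_mul_pos_left hsign hα.le).le
  · simp [hα] at hsign
  · have hin := (norm_sub_le_norm_sub_iff_inner_le (hb i) (hb j) (hA i) (hA j)).1 (hcable i j hα)
    exact mul_le_mul_of_nonneg_left hin (pos_of_mul_pos_left hsign hα.le).le

end InnerProduct

theorem SphGeneralPosition.linearIndependent_comp {d m : ℕ} {A : Fin m → EuclideanSpace ℝ (Fin d)}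
    (hA : SphGeneralPosition A) {f : Fin d → Fin m} (hf : Function.Injective f) :
    LinearIndependent ℝ (A ∘ f) :=
  (hA (univ.map ⟨f, hf⟩) (by simp)).comp (fun c => ⟨f c, mem_map_of_mem _ (mem_univ c)⟩)
    fun _ _ h => hf (congrArg Subtype.val h)

theorem eq_smul_of_sum_smul_eq_zero {K M : Type*} [Field K] [AddCommGroup M] [Module K M] {m : ℕ}
    {A : Fin (m + 1) → M} (hA : LinearIndependent K (A ∘ Fin.succ)) {α c : Fin (m + 1) → K}
    (hα : α 0 ≠ 0) (hsum : ∑ i, α i • A i = 0) (hc : ∑ i, c i • A i = 0) :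
    c = (c 0 / α 0) • α := by
  have hd : ∑ i, (c - (c 0 / α 0) • α) i • A i = 0 := by
    simp only [Pi.sub_apply, Pi.smul_apply, smul_eq_mul, sub_smul, mul_smul, sum_sub_distrib,
      ← smul_sum, hc, hsum, smul_zero, sub_zero]
  rw [Fin.sum_univ_succ] at hd
  have h0 : (c - (c 0 / α 0) • α) 0 = 0 := by simp [hα]
  rw [h0, zero_smul, zero_add] at hd
  have hsucc := Fintype.linearIndependent_iff.1 hA _ hd
  ext i
  refine Fin.cases ?_ (fun i => ?_) i
  · simp [hα]
  · simpa [sub_eq_zero] using hsucc i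

noncomputable def minorCoeff {m : ℕ} (P : Fin (m + 1) → EuclideanSpace ℝ (Fin m))
    (j : Fin (m + 1)) : ℝ :=
  (-1) ^ (j : ℕ) * (Matrix.of fun r c => P (j.succAbove c) r).det

theorem sum_minorCoeff_smul_eq_zero {m : ℕ} (P : Fin (m + 1) → EuclideanSpace ℝ (Fin m)) :
    ∑ j, minorCoeff P j • P j = 0 := by
  ext k
  -- Laplace expansion along the first row of a matrix whose first row repeats row `k + 1`.
  set N : Matrix (Fin (m + 1)) (Fin (m + 1)) ℝ := Matrix.of (Fin.cons (fun j => P j k) fun r j => P j r)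
  have hN : N.det = 0 :=
    Matrix.det_zero_of_row_eq (Fin.succ_ne_zero k).symm (by ext j; simp [N])
  rw [Matrix.det_succ_row_zero] at hN
  simp only [WithLp.ofLp_sum, WithLp.ofLp_smul, Finset.sum_apply, Pi.smul_apply, smul_eq_mul,
    WithLp.ofLp_zero, Pi.zero_apply, minorCoeff]
  rw [← hN]
  refine sum_congr rfl fun j _ => ?_
  have hsub : N.submatrix Fin.succ j.succAbove = Matrix.of fun r c => P (j.succAbove c) r := by
    ext r c; simp [N]
  simp [hsub, N]
  ring

theorem minorCoeff_ne_zero {m : ℕ} {P : Fin (m + 1) → EuclideanSpace ℝ (Fin m)} {j : Fin (m + 1)}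
    (hP : LinearIndependent ℝ (P ∘ j.succAbove)) : minorCoeff P j ≠ 0 := by
  have hcols : LinearIndependent ℝ (Matrix.of fun r c => P (j.succAbove c) r).col :=
    hP.map' (WithLp.linearEquiv 2 ℝ (Fin m → ℝ)).toLinearMap (LinearEquiv.ker _)
  exact mul_ne_zero (pow_ne_zero _ (neg_ne_zero.2 one_ne_zero))
    ((Matrix.isUnit_iff_isUnit_det _).1 (Matrix.linearIndependent_cols_iff_isUnit.1 hcols)).ne_zero

theorem continuous_minorCoeff {X : Type*} [TopologicalSpace X] {m : ℕ}
    {P : X → Fin (m + 1) → EuclideanSpace ℝ (Fin m)} (hP : ∀ i, Continuous fun x => P x i)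
    (j : Fin (m + 1)) : Continuous fun x => minorCoeff (P x) j :=
  continuous_const.mul <| Continuous.matrix_det <| continuous_pi fun r => continuous_pi fun _ =>
    (EuclideanSpace.proj r).continuous.comp (hP _)

section Framework

variable {n : ℕ} {A b : Fin (n + 2) → EuclideanSpace ℝ (Fin (n + 1))} {α : Fin (n + 2) → ℝ}

theorem exists_minorCoeff_eq_smul_of_inner_eq (hgp : SphGeneralPosition A) (hα : ∀ i, α i ≠ 0)
    (hsum : ∑ i, α i • A i = 0) (hG : ∀ i j, ⟪b i, b j⟫ = ⟪A i, A j⟫) :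
    ∃ t : ℝ, t ≠ 0 ∧ minorCoeff b = t • α := by
  have hAsucc := hgp.linearIndependent_comp (Fin.succ_injective _)
  have hbsucc : LinearIndependent ℝ (b ∘ Fin.succ) :=
    .of_inner_eq (fun i j => hG _ _) hAsucc
  have hprop := eq_smul_of_sum_smul_eq_zero hAsucc (hα 0) hsum
    (sum_smul_eq_zero_of_inner_eq hG (sum_minorCoeff_smul_eq_zero b))
  refine ⟨_, div_ne_zero ?_ (hα 0), hprop⟩
  exact minorCoeff_ne_zero (by rwa [Fin.succAbove_zero])

theorem inner_eq_iff_forall_minorCoeff_mul_pos (hA : ∀ i, ‖A i‖ = 1) (hb : ∀ i, ‖b i‖ = 1)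
    (hgp : SphGeneralPosition A) (hα : ∀ i, α i ≠ 0) (hsum : ∑ i, α i • A i = 0)
    (hstrut : ∀ i j, α i * α j < 0 → ‖A i - A j‖ ≤ ‖b i - b j‖)
    (hcable : ∀ i j, 0 < α i * α j → ‖b i - b j‖ ≤ ‖A i - A j‖) :
    (∀ i j, ⟪b i, b j⟫ = ⟪A i, A j⟫) ↔
      ∀ i j, 0 < minorCoeff b i * minorCoeff b j * (α i * α j) := by
  constructor
  · intro hG i j
    obtain ⟨t, ht, hγ⟩ := exists_minorCoeff_eq_smul_of_inner_eq hgp hα hsum hG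
    have hi := hα i
    have hj := hα j
    rw [hγ, Pi.smul_apply, Pi.smul_apply, smul_eq_mul, smul_eq_mul,
      show t * α i * (t * α j) * (α i * α j) = (t * α i * α j) ^ 2 by ring]
    positivity
  · intro hsign
    refine inner_eq_of_sum_smul_eq_zero (fun i h => ?_) (sum_minorCoeff_smul_eq_zero b)
      fun i j => mul_inner_le_mul_inner_of_tensegrity hA hb hstrut hcable (hsign i j)
    simpa [h] using hsign i i

end Framework

theorem F_n1_rigid_hemisphere_general {n : ℕ}
    (A : Fin (n + 2) → EuclideanSpace ℝ (Fin (n + 1)))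
    (hA : ∀ i, ‖A i‖ = 1)
    (hgp : SphGeneralPosition A)
    (α : Fin (n + 2) → ℝ) (hα : ∀ i, α i ≠ 0)
    (hsum : ∑ i, α i • A i = 0)
    (B : Fin (n + 2) → ℝ → EuclideanSpace ℝ (Fin (n + 1)))
    (hBcont : ∀ i, ContinuousOn (B i) (Set.Icc 0 1))
    (hBsph : ∀ i, ∀ t ∈ Set.Icc (0 : ℝ) 1, ‖B i t‖ = 1)
    (hB0 : ∀ i, B i 0 = A i)
    (hstrut : ∀ i j, α i * α j < 0 →
      ∀ t ∈ Set.Icc (0 : ℝ) 1, ‖A i - A j‖ ≤ ‖B i t - B j t‖)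
    (hcable : ∀ i j, 0 < α i * α j →
      ∀ t ∈ Set.Icc (0 : ℝ) 1, ‖B i t - B j t‖ ≤ ‖A i - A j‖) :
    ∀ i j, ∀ t ∈ Set.Icc (0 : ℝ) 1, ‖B i t - B j t‖ = ‖A i - A j‖ := by
  have := isPreconnected_iff_preconnectedSpace.1 (isPreconnected_Icc (a := (0 : ℝ)) (b := 1))
  have hB : ∀ i, Continuous fun x : Set.Icc (0 : ℝ) 1 => B i x := fun i => (hBcont i).domRestrict
  set S := {x : Set.Icc (0 : ℝ) 1 | ∀ i j, ⟪B i x, B j x⟫ = ⟪A i, A j⟫}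
  have hS : S = {x : Set.Icc (0 : ℝ) 1 | ∀ i j, 0 < minorCoeff (B · x) i * minorCoeff (B · x) j * (α i * α j)} :=
    Set.ext fun x => inner_eq_iff_forall_minorCoeff_mul_pos hA (hBsph · x x.2) hgp hα hsum
      (fun i j h => hstrut i j h x x.2) (fun i j h => hcable i j h x x.2)
  have hclosed : IsClosed S := by
    simp only [S, Set.ofPred_forall]
    exact isClosed_iInter fun i => isClosed_iInter fun j =>
      isClosed_eq ((hB i).inner (hB j)) continuous_const
  have hopen : IsOpen S := by
    simp only [hS, Set.ofPred_forall]
    exact isOpen_iInter_of_finite fun i => isOpen_iInter_of_finite fun j =>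
      isOpen_lt continuous_const <|
        ((continuous_minorCoeff hB i).mul (continuous_minorCoeff hB j)).mul continuous_const
  have hS_univ : S = Set.univ :=
    IsClopen.eq_univ ⟨hclosed, hopen⟩ ⟨⟨0, by simp⟩, fun i j => by simp [hB0]⟩
  intro i j t ht
  have hG : ⟪B i t, B j t⟫ = ⟪A i, A j⟫ := (hS_univ ▸ Set.mem_univ _ : ⟨t, ht⟩ ∈ S) i j
  exact le_antisymm ((norm_sub_le_norm_sub_iff_inner_le (hBsph i t ht) (hBsph j t ht) (hA i)
    (hA j)).2 hG.ge) ((norm_sub_le_norm_sub_iff_inner_le (hA i) (hA j) (hBsph i t ht)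
    (hBsph j t ht)).2 hG.le)

/-- The framework `F_{n,1}` is rigid in the open hemisphere `Sⁿ₊`: any continuous motion in
the open hemisphere satisfying the strut-cable constraints determined by the signs of
`αᵢα_j` preserves all the distances. -/
theorem F_n1_rigid_hemisphere {n : ℕ}
    (e : EuclideanSpace ℝ (Fin (n + 1))) (he : ‖e‖ = 1)
    (A : Fin (n + 2) → EuclideanSpace ℝ (Fin (n + 1)))
    (hA : ∀ i, ‖A i‖ = 1) (hAhemi : ∀ i, 0 < (inner ℝ (A i) e : ℝ))
    (hgp : SphGeneralPosition A)
    (α : Fin (n + 2) → ℝ) (hα : ∀ i, α i ≠ 0)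
    (hsum : ∑ i, α i • A i = 0)
    (B : Fin (n + 2) → ℝ → EuclideanSpace ℝ (Fin (n + 1)))
    (hBcont : ∀ i, ContinuousOn (B i) (Set.Icc 0 1))
    (hBsph : ∀ i, ∀ t ∈ Set.Icc (0 : ℝ) 1, ‖B i t‖ = 1)
    (hBhemi : ∀ i, ∀ t ∈ Set.Icc (0 : ℝ) 1, 0 < (inner ℝ (B i t) e : ℝ))
    (hB0 : ∀ i, B i 0 = A i)
    (hstrut : ∀ i j, α i * α j < 0 →
      ∀ t ∈ Set.Icc (0 : ℝ) 1, ‖A i - A j‖ ≤ ‖B i t - B j t‖)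
    (hcable : ∀ i j, 0 < α i * α j →
      ∀ t ∈ Set.Icc (0 : ℝ) 1, ‖B i t - B j t‖ ≤ ‖A i - A j‖) :
    ∀ i j, ∀ t ∈ Set.Icc (0 : ℝ) 1, ‖B i t - B j t‖ = ‖A i - A j‖ :=
  F_n1_rigid_hemisphere_general A hA hgp α hα hsum B hBcont hBsph hB0 hstrut hcable
end

section
/- Equip ℝ^{n+2}, with coordinates (x₀,…,x_{n+1}), with the Minkowski bilinear form ⟪x,y⟫ = −x₀y₀ + x₁y₁ + ⋯ + x_{n+1}y_{n+1}, and let H^{n+1} = {x : ⟪x,x⟫ = −1, x₀ > 0}; let Hⁿ = {x ∈ H^{n+1} : x_{n+1} = 0}. Let A₁,…,A_{n+2} ∈ Hⁿ be in general position and α₁,…,α_{n+2} nonzero reals with Σᵢ αᵢAᵢ = 0 (as vectors of ℝ^{n+2}). Suppose B₁,…,B_{n+2} ∈ H^{n+1} satisfy the tensegrity constraints of G_{n,1}: ⟪Bᵢ−B_j, Bᵢ−B_j⟫ ≤ ⟪Aᵢ−A_j, Aᵢ−A_j⟫ whenever αᵢα_j < 0, and ⟪Bᵢ−B_j, Bᵢ−B_j⟫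 ≥ ⟪Aᵢ−A_j, Aᵢ−A_j⟫ whenever αᵢα_j > 0. Then ⟪Bᵢ−B_j, Bᵢ−B_j⟫ = ⟪Aᵢ−A_j, Aᵢ−A_j⟫ for all i, j; i.e. G_{n,1} is globally rigid in hyperbolic space H^{n+1}. -/
/-- The Minkowski bilinear form on `ℝ^{m+1}` with coordinates `(x₀, …, x_m)`:
`⟪x,y⟫ = −x₀y₀ + x₁y₁ + ⋯ + x_m y_m`. -/
def mink {m : ℕ} (x y : Fin (m + 1) → ℝ) : ℝ :=
  ∑ i, (if i = 0 then -(x i * y i) else x i * y i)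

/-- The hyperboloid model of hyperbolic space: `⟪x,x⟫ = −1` and `x₀ > 0`. -/
def InHyperbolic {m : ℕ} (x : Fin (m + 1) → ℝ) : Prop :=
  mink x x = -1 ∧ 0 < x 0


/-!
Put `W = ∑ αᵢ Bᵢ`. Since `⟪P - Q, P - Q⟫ = -2 - 2⟪P, Q⟫` on the hyperboloid, every cable and
strut constraint says `αᵢαⱼ (⟪Bᵢ, Bⱼ⟫ - ⟪Aᵢ, Aⱼ⟫) ≤ 0`. Summing over `i` and using
`∑ αᵢ Aᵢ = 0` gives `α_k ⟪W, B_k⟫ ≤ 0` for every `k`, and summing once more `⟪W, W⟫ ≤ 0`.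
The `αᵢ` take both signs (their weighted sum against the positive `x₀`-coordinates of the `Aᵢ`
vanishes), while a timelike `W` pairs with all of the future-pointing `B_k` with one strict sign;
so `W` is not timelike, `⟪W, W⟫ = 0`, and every inequality above is an equality.
-/

open Finset

section Minkowski

variable {m : ℕ}

lemma mink_eq_neg_add_sum (x y : Fin (m + 1) → ℝ) :
    mink x y = -(x 0 * y 0) + ∑ i : Fin m, x i.succ * y i.succ := by
  simp [mink, Fin.sum_univ_succ, Fin.succ_ne_zero]

lemma mink_comm (x y : Fin (m + 1) → ℝ) : mink x y = mink y x := by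
  simp only [mink, mul_comm (x _)]

lemma mink_sum_smul_left {ι : Type*} [Fintype ι] (c : ι → ℝ) (f : ι → Fin (m + 1) → ℝ)
    (y : Fin (m + 1) → ℝ) : mink (∑ i, c i • f i) y = ∑ i, c i * mink (f i) y := by
  simp only [mink, Finset.sum_apply, Pi.smul_apply, smul_eq_mul, mul_sum]
  rw [sum_comm]
  refine sum_congr rfl fun j _ => ?_
  split_ifs <;> simp only [sum_mul, ← sum_neg_distrib] <;>
    exact sum_congr rfl fun i _ => by ring

lemma mink_sum_smul_right {ι : Type*} [Fintype ι] (x : Fin (m + 1) → ℝ) (c : ι → ℝ)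
    (f : ι → Fin (m + 1) → ℝ) : mink x (∑ i, c i • f i) = ∑ i, c i * mink x (f i) := by
  simp only [mink_comm x, mink_sum_smul_left]

lemma mink_sub_self (x y : Fin (m + 1) → ℝ) :
    mink (x - y) (x - y) = mink x x + mink y y - 2 * mink x y := by
  simp only [mink, Pi.sub_apply, mul_sum, ← sum_add_distrib,
    ← sum_sub_distrib]
  exact sum_congr rfl fun i _ => by split_ifs <;> ring

lemma InHyperbolic.mink_sub_self {x y : Fin (m + 1) → ℝ} (hx : InHyperbolic x)
    (hy : InHyperbolic y) : mink (x - y) (x - y) = -2 - 2 * mink x y := by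
  rw [_root_.mink_sub_self, hx.1, hy.1]
  ring

/-- Reverse Cauchy–Schwarz inequality for timelike vectors, in sign form. -/
lemma mul_mink_neg_of_timelike {u v : Fin (m + 1) → ℝ} (hu : mink u u < 0) (hv : mink v v < 0)
    (hv0 : 0 < v 0) : u 0 * mink u v < 0 := by
  rw [mink_eq_neg_add_sum] at hu hv ⊢
  have hcs := sum_mul_sq_le_sq_mul_sq univ (fun i : Fin m => u i.succ)
    (fun i : Fin m => v i.succ)
  have hsu : 0 ≤ ∑ i : Fin m, u i.succ ^ 2 := sum_nonneg fun i _ => sq_nonneg _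
  have hsv : 0 ≤ ∑ i : Fin m, v i.succ ^ 2 := sum_nonneg fun i _ => sq_nonneg _
  simp only [← pow_two] at hu hv
  set s := ∑ i : Fin m, u i.succ * v i.succ
  have hu0 : 0 < u 0 ^ 2 := by linarith
  have hlt : (u 0 * s) ^ 2 < (u 0 ^ 2 * v 0) ^ 2 := by
    calc (u 0 * s) ^ 2 = u 0 ^ 2 * s ^ 2 := by ring
      _ ≤ u 0 ^ 2 * ((∑ i : Fin m, u i.succ ^ 2) * ∑ i : Fin m, v i.succ ^ 2) := by gcongr
      _ < u 0 ^ 2 * (u 0 ^ 2 * v 0 ^ 2) := by gcongr <;> linarith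
      _ = (u 0 ^ 2 * v 0) ^ 2 := by ring
  nlinarith [abs_lt_of_sq_lt_sq' hlt (by positivity)]

end Minkowski

lemma exists_mul_neg_of_sum_mul_eq_zero {ι : Type*} [Fintype ι] [Nonempty ι] {α a : ι → ℝ}
    (hα : ∀ i, α i ≠ 0) (ha : ∀ i, 0 < a i) (hsum : ∑ i, α i * a i = 0) {c : ℝ} (hc : c ≠ 0) :
    ∃ k, α k * c < 0 := by
  by_contra! h
  have hpos : 0 < ∑ i, α i * c * a i :=
    sum_pos (fun i _ => mul_pos ((h i).lt_of_ne' (mul_ne_zero (hα i) hc)) (ha i)) univ_nonempty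
  have hzero : ∑ i, α i * c * a i = 0 := by
    simp only [mul_right_comm _ c, ← sum_mul, hsum, zero_mul]
  exact hpos.ne' hzero

lemma mink_self_nonneg_of_mul_mink_nonpos {m : ℕ} {ι : Type*} {B : ι → Fin (m + 1) → ℝ}
    {α : ι → ℝ} {w : Fin (m + 1) → ℝ} (hB : ∀ k, InHyperbolic (B k))
    (hα : ∀ c ≠ 0, ∃ k, α k * c < 0) (hw : ∀ k, α k * mink w (B k) ≤ 0) : 0 ≤ mink w w := by
  by_contra! hlt
  have hsign k : w 0 * mink w (B k) < 0 :=
    mul_mink_neg_of_timelike hlt (by rw [(hB k).1]; norm_num) (hB k).2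
  obtain ⟨k₀, -⟩ := hα 1 one_ne_zero
  obtain ⟨k, hk⟩ := hα (w 0) (left_ne_zero_of_mul (hsign k₀).ne)
  nlinarith [mul_pos_of_neg_of_neg hk (hsign k), mul_nonpos_of_nonneg_of_nonpos
    (sq_nonneg (w 0)) (hw k)]

section Stress

variable {m : ℕ} {ι : Type*} [Fintype ι] {A B : ι → Fin (m + 1) → ℝ} {α : ι → ℝ}

lemma mul_mink_sum_smul_eq_sum_stress (hsum : ∑ i, α i • A i = 0) (k : ι) :
    α k * mink (∑ i, α i • B i) (B k) =
      ∑ i, α i * α k * (mink (B i) (B k) - mink (A i) (A k)) := by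
  have hA : ∑ i, α i * mink (A i) (A k) = 0 := by
    rw [← mink_sum_smul_left, hsum]
    simp [mink]
  calc α k * mink (∑ i, α i • B i) (B k)
      = α k * (∑ i, α i * mink (B i) (B k) - ∑ i, α i * mink (A i) (A k)) := by
        rw [hA, sub_zero, mink_sum_smul_left]
    _ = ∑ i, α i * α k * (mink (B i) (B k) - mink (A i) (A k)) := by
        rw [← sum_sub_distrib, mul_sum]
        exact sum_congr rfl fun i _ => by ring

theorem mink_eq_of_stress_nonpos (hA : ∀ i, 0 < A i 0) (hB : ∀ i, InHyperbolic (B i))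
    (hα : ∀ i, α i ≠ 0) (hsum : ∑ i, α i • A i = 0)
    (hstress : ∀ i j, α i * α j * (mink (B i) (B j) - mink (A i) (A j)) ≤ 0) (i j : ι) :
    mink (B i) (B j) = mink (A i) (A j) := by
  have : Nonempty ι := ⟨i⟩
  set W := ∑ i, α i • B i
  have hW k : α k * mink W (B k) ≤ 0 := by
    rw [mul_mink_sum_smul_eq_sum_stress hsum]
    exact sum_nonpos fun i _ => hstress i k
  have hsum0 : ∑ i, α i * A i 0 = 0 := by simpa using congrFun hsum 0
  have hWW : 0 ≤ ∑ k, α k * mink W (B k) := by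
    rw [← mink_sum_smul_right]
    exact mink_self_nonneg_of_mul_mink_nonpos hB
      (fun c hc => exists_mul_neg_of_sum_mul_eq_zero hα hA hsum0 hc) hW
  have hWj : ∑ i, α i * α j * (mink (B i) (B j) - mink (A i) (A j)) = 0 := by
    rw [← mul_mink_sum_smul_eq_sum_stress hsum]
    exact (sum_eq_zero_iff_of_nonpos fun k _ => hW k).1
      (le_antisymm (sum_nonpos fun k _ => hW k) hWW) j (mem_univ j)
  have hij := (sum_eq_zero_iff_of_nonpos fun i _ => hstress i j).1 hWj i (mem_univ i)
  exact sub_eq_zero.1 ((mul_eq_zero.1 hij).resolve_left (mul_ne_zero (hα i) (hα j)))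

end Stress

theorem G_n1_globally_rigid_hyperbolic_general {n : ℕ}
    (A : Fin (n + 2) → (Fin (n + 2) → ℝ))
    (hA : ∀ i, InHyperbolic (A i))
    (α : Fin (n + 2) → ℝ) (hα : ∀ i, α i ≠ 0)
    (hsum : ∑ i, α i • A i = 0)
    (B : Fin (n + 2) → (Fin (n + 2) → ℝ))
    (hB : ∀ i, InHyperbolic (B i))
    (hcable : ∀ i j, α i * α j < 0 →
      mink (B i - B j) (B i - B j) ≤ mink (A i - A j) (A i - A j))
    (hstrut : ∀ i j, 0 < α i * α j →
      mink (A i - A j) (A i - A j) ≤ mink (B i - B j) (B i - B j)) :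
    ∀ i j, mink (B i - B j) (B i - B j) = mink (A i - A j) (A i - A j) := by
  have hstress i j : α i * α j * (mink (B i) (B j) - mink (A i) (A j)) ≤ 0 := by
    have hcable := hcable i j
    have hstrut := hstrut i j
    rw [(hA i).mink_sub_self (hA j), (hB i).mink_sub_self (hB j)] at hcable hstrut
    rcases lt_trichotomy (α i * α j) 0 with h | h | h
    · nlinarith [hcable h]
    · simp [h]
    · nlinarith [hstrut h]
  intro i j
  rw [(hA i).mink_sub_self (hA j), (hB i).mink_sub_self (hB j),
    mink_eq_of_stress_nonpos (fun i => (hA i).2) hB hα hsum hstress i j]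

/-- The framework `G_{n,1}` is globally rigid in `H^{n+1}`: if points `B₁, …, B_{n+2}` on the
hyperboloid `H^{n+1} ⊂ ℝ^{n+2}` satisfy the cable-strut constraints determined by the signs
of `αᵢα_j`, then all the Minkowski squared distances (equivalently, all the hyperbolic
distances) are preserved. -/
theorem G_n1_globally_rigid_hyperbolic {n : ℕ}
    (A : Fin (n + 2) → (Fin (n + 2) → ℝ))
    (hA : ∀ i, InHyperbolic (A i))
    (hAplane : ∀ i, A i (Fin.last (n + 1)) = 0)
    (hgp : ∀ s : Finset (Fin (n + 2)), s.card = n + 1 →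
      LinearIndependent ℝ (fun i : ↥s => A i.1))
    (α : Fin (n + 2) → ℝ) (hα : ∀ i, α i ≠ 0)
    (hsum : ∑ i, α i • A i = 0)
    (B : Fin (n + 2) → (Fin (n + 2) → ℝ))
    (hB : ∀ i, InHyperbolic (B i))
    (hcable : ∀ i j, α i * α j < 0 →
      mink (B i - B j) (B i - B j) ≤ mink (A i - A j) (A i - A j))
    (hstrut : ∀ i j, 0 < α i * α j →
      mink (A i - A j) (A i - A j) ≤ mink (B i - B j) (B i - B j)) :
    ∀ i j, mink (B i - B j) (B i - B j) = mink (A i - A j) (A i - A j) :=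
  G_n1_globally_rigid_hyperbolic_general A hA α hα hsum B hB hcable hstrut
end

section
/- Let A₁,…,A_{n+2} : ℝ → ℝ^{n+1} be C¹ maps with ‖Aᵢ(t)‖ = 1 for all t (a motion on the unit sphere Sⁿ), let t₀ ∈ ℝ be such that A₁(t₀),…,A_{n+2}(t₀) are in general position (every n+1 of them linearly independent in ℝ^{n+1}), and let α₁,…,α_{n+2} be nonzero reals with Σᵢ αᵢAᵢ(t₀) = 0. Then Σ_{1≤i<j≤n+2} αᵢα_j · d/dt[‖Aᵢ(t) − A_j(t)‖²] evaluated at t = t₀ equals 0. (This is the k = 1 case, proved in the paper within Lemma 4.6, of the spherical volume-balance identity; since on the unit sphere ‖P−Q‖² = 2 − 2cos d(P,Q) with d the geodesic distance, it is equivalent to Σ_{i<j} αᵢα_j sin(d(Aᵢ(t₀),A_j(t₀))) · d/dt[d(Aᵢ(t),A_j(t))]|_{t₀} = 0.) -/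
/-!
For unit vectors `xᵢ`, expanding `‖xᵢ - xⱼ‖² = 2 - 2⟪xᵢ, xⱼ⟫` gives
`∑_{i<j} αᵢ αⱼ ‖xᵢ - xⱼ‖² = (∑ αᵢ)² - ‖∑ αᵢ xᵢ‖²`. Along the motion the right-hand side is at most
`(∑ αᵢ)²`, with equality at `t₀` because `∑ αᵢ Aᵢ(t₀) = 0`; so it has a maximum at `t₀` and its
derivative there vanishes.
-/

open Finset
open scoped RealInnerProductSpace

theorem Finset.sum_sum_eq_sum_diag_add_two_nsmul_sum_sum_lt {ι M : Type*} [LinearOrder ι]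
    [AddCommMonoid M] (s : Finset ι) {f : ι → ι → M} (hf : ∀ i j, f i j = f j i) :
    ∑ i ∈ s, ∑ j ∈ s, f i j = ∑ i ∈ s, f i i + 2 • ∑ i ∈ s, ∑ j ∈ s with i < j, f i j := by
  have hsplit : ∀ i ∈ s, ∑ j ∈ s, f i j
      = f i i + ∑ j ∈ s with i < j, f i j + ∑ j ∈ s with j < i, f i j := by
    intro i hi
    have htri : ∀ j, f i j = (if i = j then f i j else 0) + (if i < j then f i j else 0)
        + (if j < i then f i j else 0) := by
      intro j
      rcases lt_trichotomy i j with h | rfl | h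
      · simp [h, h.ne, h.not_gt]
      · simp
      · simp [h, h.ne', h.not_gt]
    rw [sum_congr rfl fun j _ => htri j, sum_add_distrib, sum_add_distrib, sum_ite_eq, if_pos hi,
      sum_filter, sum_filter]
  have hswap : ∑ i ∈ s, ∑ j ∈ s with j < i, f i j = ∑ i ∈ s, ∑ j ∈ s with i < j, f i j := by
    rw [sum_comm' (t' := s) (s' := fun j => s.filter (j < ·))]
    · simp_rw [hf]
    · intro i j; simp only [mem_filter]; tauto
  rw [sum_congr rfl hsplit, sum_add_distrib, sum_add_distrib, hswap, two_nsmul, add_assoc]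

section InnerProductSpace

variable {ι F : Type*} [NormedAddCommGroup F] [InnerProductSpace ℝ F]

theorem sum_sum_mul_norm_sub_sq (s : Finset ι) (w : ι → ℝ) (x : ι → F) :
    ∑ i ∈ s, ∑ j ∈ s, w i * w j * ‖x i - x j‖ ^ 2
      = 2 * (∑ i ∈ s, w i) * ∑ i ∈ s, w i * ‖x i‖ ^ 2 - 2 * ‖∑ i ∈ s, w i • x i‖ ^ 2 := by
  have hS : ‖∑ i ∈ s, w i • x i‖ ^ 2 = ∑ i ∈ s, ∑ j ∈ s, w i * w j * ⟪x i, x j⟫ := by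
    simp_rw [← real_inner_self_eq_norm_sq, sum_inner, inner_sum, real_inner_smul_left,
      real_inner_smul_right, mul_assoc]
  calc ∑ i ∈ s, ∑ j ∈ s, w i * w j * ‖x i - x j‖ ^ 2
      = ∑ i ∈ s, ∑ j ∈ s, (w i * (w j * ‖x j‖ ^ 2) + w j * (w i * ‖x i‖ ^ 2)
          - 2 * (w i * w j * ⟪x i, x j⟫)) := by
        refine sum_congr rfl fun i _ => sum_congr rfl fun j _ => ?_
        rw [norm_sub_sq_real]; ring
    _ = _ := by
        simp only [sum_add_distrib, sum_sub_distrib, ← mul_sum, ← sum_mul, hS]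
        ring

theorem sum_sum_lt_mul_norm_sub_sq_of_norm_eq_one [LinearOrder ι] (s : Finset ι) (w : ι → ℝ)
    {x : ι → F} (hx : ∀ i ∈ s, ‖x i‖ = 1) :
    ∑ i ∈ s, ∑ j ∈ s with i < j, w i * w j * ‖x i - x j‖ ^ 2
      = (∑ i ∈ s, w i) ^ 2 - ‖∑ i ∈ s, w i • x i‖ ^ 2 := by
  have hdiag : ∑ i ∈ s, w i * w i * ‖x i - x i‖ ^ 2 = 0 := by simp
  have hnorm : ∑ i ∈ s, w i * ‖x i‖ ^ 2 = ∑ i ∈ s, w i :=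
    sum_congr rfl fun i hi => by simp [hx i hi]
  have hfull := sum_sum_mul_norm_sub_sq s w x
  rw [sum_sum_eq_sum_diag_add_two_nsmul_sum_sum_lt s fun i j => by rw [norm_sub_rev]; ring,
    hdiag, hnorm, zero_add, two_nsmul] at hfull
  linarith

end InnerProductSpace

theorem spherical_weighted_sum_deriv_eq_zero_general {n : ℕ}
    (A : Fin (n + 2) → ℝ → EuclideanSpace ℝ (Fin (n + 1)))
    (hA : ∀ i, ContDiff ℝ 1 (A i))
    (hAsph : ∀ i t, ‖A i t‖ = 1)
    (t₀ : ℝ)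
    (α : Fin (n + 2) → ℝ)
    (hsum : ∑ i, α i • A i t₀ = 0) :
    ∑ i : Fin (n + 2), ∑ j : Fin (n + 2),
      (if i < j then α i * α j * deriv (fun t : ℝ => ‖A i t - A j t‖ ^ 2) t₀ else 0) = 0 := by
  have hdist : ∀ i j, DifferentiableAt ℝ (fun t => ‖A i t - A j t‖ ^ 2) t₀ := fun i j =>
    (((hA i).differentiable one_ne_zero t₀).sub ((hA j).differentiable one_ne_zero t₀)).norm_sq ℝ
  have hmax : IsLocalMax (fun t => (∑ i, α i) ^ 2 - ‖∑ i, α i • A i t‖ ^ 2) t₀ :=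
    IsMaxOn.isLocalMax (fun t _ => by simp [hsum]) Filter.univ_mem
  calc ∑ i, ∑ j, (if i < j then α i * α j * deriv (fun t => ‖A i t - A j t‖ ^ 2) t₀ else 0)
      = deriv (fun t => ∑ i, ∑ j with i < j, α i * α j * ‖A i t - A j t‖ ^ 2) t₀ := by
        simp_rw [← sum_filter, ← deriv_const_mul _ (hdist _ _)]
        rw [deriv_fun_sum fun i _ => .fun_sum fun j _ => (hdist i j).const_mul _]
        simp_rw [deriv_fun_sum fun j _ => (hdist _ j).const_mul _]
    _ = deriv (fun t => (∑ i, α i) ^ 2 - ‖∑ i, α i • A i t‖ ^ 2) t₀ := by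
        simp_rw [sum_sum_lt_mul_norm_sub_sq_of_norm_eq_one univ α fun i _ => hAsph i _]
    _ = 0 := hmax.deriv_eq_zero

/-- For a `C¹` motion of a degenerate spherical `(n+1)`-simplex on the unit sphere `Sⁿ`, the
`α`-weighted sum of the derivatives of the squared chordal distances vanishes (the `k = 1`
case of the spherical volume-balance identity). -/
theorem spherical_weighted_sum_deriv_eq_zero {n : ℕ}
    (A : Fin (n + 2) → ℝ → EuclideanSpace ℝ (Fin (n + 1)))
    (hA : ∀ i, ContDiff ℝ 1 (A i))
    (hAsph : ∀ i t, ‖A i t‖ = 1)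
    (t₀ : ℝ)
    (hgp : SphGeneralPosition (fun i => A i t₀))
    (α : Fin (n + 2) → ℝ) (hα : ∀ i, α i ≠ 0)
    (hsum : ∑ i, α i • A i t₀ = 0) :
    ∑ i : Fin (n + 2), ∑ j : Fin (n + 2),
      (if i < j then α i * α j * deriv (fun t : ℝ => ‖A i t - A j t‖ ^ 2) t₀ else 0) = 0 :=
  spherical_weighted_sum_deriv_eq_zero_general A hA hAsph t₀ α hsum
end
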